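/- arXiv:2211.01411 — 2 statements merged into one kernel-verified Lean document; each statement's English description precedes it below -/
import Mathlib

section
/- For the trace-constrained problem min trace(X^T B) s.t. trace(X^T R X) ≤ 1 with R positive definite, compressing with a full-column-rank matrix C yields an optimal value -sqrt(trace(B^T C (C^T R C)^{-1} C^T B)) that is greater than or equal to the uncompressed optimal value -sqrt(trace(B^T R^{-1} B)). -/
/-!
Put `G = (Cᵀ R C)⁻¹` and `P = C G Cᵀ`. Then `P R P = P`, and expanding shows
`R⁻¹ - P = (R⁻¹ - P) R (R⁻¹ - P)`, a congruence of the positive definite `R`. Hence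
`P ≤ R⁻¹` in the Loewner order, which survives the congruence by `B` and taking traces;
`x ↦ -√x` is antitone.
-/

open Matrix

open scoped MatrixOrder ComplexOrder

namespace Matrix

variable {K 𝕜 : Type*} {l m n : Type*} [Fintype n]

theorem mulVec_injective_of_rank_eq_card [Field K] {A : Matrix m n K}
    (hA : A.rank = Fintype.card n) : Function.Injective A.mulVec :=
  mulVec_injective_iff.mpr <| linearIndependent_iff_card_eq_finrank_span.mpr <| by
    rw [← hA, rank_eq_finrank_span_cols]
    rfl

variable [RCLike 𝕜]

theorem PosDef.mul_inv_conjTranspose_mul_mul_mul_conjTranspose_le_inv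
    [Fintype m] [DecidableEq m] [DecidableEq n] {R : Matrix n n 𝕜} (hR : R.PosDef)
    {C : Matrix n m 𝕜} (hC : Function.Injective C.mulVec) :
    C * (Cᴴ * R * C)⁻¹ * Cᴴ ≤ R⁻¹ := by
  set G := (Cᴴ * R * C)⁻¹
  set P := C * G * Cᴴ
  have hRunit : IsUnit R.det := hR.det_pos.ne'.isUnit
  have hGunit : IsUnit (Cᴴ * R * C).det := (hR.conjTranspose_mul_mul_same hC).det_pos.ne'.isUnit
  have hP_idem : P * R * P = P := by
    calc P * R * P = C * (G * (Cᴴ * R * C)) * G * Cᴴ := by simp only [P, Matrix.mul_assoc]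
      _ = P := by rw [nonsing_inv_mul _ hGunit, Matrix.mul_one]
  have hP_herm : P.IsHermitian :=
    isHermitian_mul_mul_conjTranspose C (isHermitian_conjTranspose_mul_mul C hR.1).inv
  have hcongr : (R⁻¹ - P) * R * (R⁻¹ - P) = R⁻¹ - P := by
    simp only [Matrix.sub_mul, Matrix.mul_sub, hP_idem, nonsing_inv_mul _ hRunit,
      Matrix.one_mul, Matrix.mul_assoc, mul_nonsing_inv _ hRunit, Matrix.mul_one]
    abel
  have hherm : (R⁻¹ - P)ᴴ = R⁻¹ - P := (hR.1.inv.sub hP_herm).eq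
  rw [le_iff, ← hcongr]
  simpa only [hherm] using hR.posSemidef.mul_mul_conjTranspose_same (R⁻¹ - P)

theorem trace_conjTranspose_mul_mul_le_of_le [Fintype l] {A A' : Matrix n n 𝕜} (h : A ≤ A')
    (B : Matrix n l 𝕜) : (Bᴴ * A * B).trace ≤ (Bᴴ * A' * B).trace := by
  have := ((le_iff.mp h).conjTranspose_mul_mul_same B).trace_nonneg
  rwa [Matrix.mul_sub, Matrix.sub_mul, trace_sub, sub_nonneg] at this

end Matrix

theorem compressed_optimal_value_bound_general {M m Q : ℕ}
    (R : Matrix (Fin M) (Fin M) ℝ) (hR : R.PosDef)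
    (B : Matrix (Fin M) (Fin Q) ℝ)
    (C : Matrix (Fin M) (Fin m) ℝ) (hC : C.rank = m) :
    -Real.sqrt ((Bᵀ * R⁻¹ * B).trace) ≤
      -Real.sqrt ((Bᵀ * C * (Cᵀ * R * C)⁻¹ * Cᵀ * B).trace) := by
  have hCinj := mulVec_injective_of_rank_eq_card (hC.trans (Fintype.card_fin m).symm)
  have hle := trace_conjTranspose_mul_mul_le_of_le
    (hR.mul_inv_conjTranspose_mul_mul_mul_conjTranspose_le_inv hCinj) B
  simp only [conjTranspose_eq_transpose_of_trivial, Matrix.mul_assoc] at hle ⊢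
  exact neg_le_neg (Real.sqrt_le_sqrt hle)

/-- The compressed optimal value `-√(trace(Bᵀ C (Cᵀ R C)⁻¹ Cᵀ B))` of the
trace-constrained problem is greater than or equal to the uncompressed optimal
value `-√(trace(Bᵀ R⁻¹ B))`. -/
theorem compressed_optimal_value_bound {M m Q : ℕ}
    (R : Matrix (Fin M) (Fin M) ℝ) (hR : R.PosDef)
    (B : Matrix (Fin M) (Fin Q) ℝ) (hB : B ≠ 0)
    (C : Matrix (Fin M) (Fin m) ℝ) (hC : C.rank = m) :
    -Real.sqrt ((Bᵀ * R⁻¹ * B).trace) ≤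
      -Real.sqrt ((Bᵀ * C * (Cᵀ * R * C)⁻¹ * Cᵀ * B).trace) :=
  compressed_optimal_value_bound_general R hR B C hC
end

section
/- For the MMSE problem with desired signals d_k = D^T d_q (D invertible), given the centralized MMSE solution X_q* for node q, the minimizer over Q x Q matrices F of E[||d_k - F^T X_q*^T y||^2] is F* = D (assuming X_q*^T R_yy X_q* is invertible), and X_q* F* = X_k* recovers node k's centralized MMSE solution. -/
/-!
With `A = X_q*ᵀ R_yy X_q*` and `R_{y d_k} = R_{y d_q} D`, one has `X_q*ᵀ R_{y d_k} = A D`, so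
completing the square gives `g F = g D + tr((F - D)ᵀ A (F - D))`. Since `A` is positive
semidefinite and invertible, it is positive definite, and the last term is nonnegative and
vanishes only at `F = D`.
-/

open Matrix

namespace Matrix

variable {m n : Type*} [Fintype m] [Fintype n]

theorem trace_sub_two_smul_add_eq_add_trace {R : Type*} [CommRing R] {A : Matrix n n R}
    (hA : A.IsSymm) (C : Matrix m m R) (F D : Matrix n m R) :
    (C - 2 • (Fᵀ * (A * D)) + Fᵀ * A * F).trace =
      (C - Dᵀ * A * D).trace + ((F - D)ᵀ * A * (F - D)).trace := by
  have hcross : (Dᵀ * A * F).trace = (Fᵀ * (A * D)).trace := by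
    rw [← trace_transpose, transpose_mul, transpose_mul, hA.eq, transpose_transpose]
  have hexpand : (F - D)ᵀ * A * (F - D) =
      Fᵀ * A * F - Fᵀ * (A * D) - Dᵀ * A * F + Dᵀ * A * D := by
    simp only [transpose_sub, Matrix.sub_mul, Matrix.mul_sub, Matrix.mul_assoc]
    abel
  rw [hexpand]
  simp only [trace_add, trace_sub, trace_smul, hcross]
  ring

open scoped ComplexOrder MatrixOrder in
theorem PosDef.trace_conjTranspose_mul_mul_same_eq_zero_iff {𝕜 : Type*} [RCLike 𝕜]
    {A : Matrix n n 𝕜} (hA : A.PosDef) {E : Matrix n m 𝕜} :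
    (Eᴴ * A * E).trace = 0 ↔ E = 0 := by
  classical
  rw [(hA.posSemidef.conjTranspose_mul_mul_same E).trace_eq_zero_iff]
  obtain ⟨B, hB, rfl⟩ := CStarAlgebra.isStrictlyPositive_iff_eq_star_mul_self.mp
    hA.isStrictlyPositive
  rw [star_eq_conjTranspose, ← Matrix.mul_assoc, Matrix.mul_assoc _ B, ← conjTranspose_mul,
    conjTranspose_mul_self_eq_zero]
  have hdet : IsUnit B.det := (isUnit_iff_isUnit_det B).mp hB
  exact ⟨fun h => by rw [← nonsing_inv_mul_cancel_left (A := B) E hdet, h, Matrix.mul_zero],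
    fun h => by rw [h, Matrix.mul_zero]⟩

end Matrix

theorem mmse_compressed_recovery_general {M Q : ℕ}
    (Ryy : Matrix (Fin M) (Fin M) ℝ) (hR : Ryy.PosDef)
    (Rydq : Matrix (Fin M) (Fin Q) ℝ)
    (Rdkdk : Matrix (Fin Q) (Fin Q) ℝ)
    (D : Matrix (Fin Q) (Fin Q) ℝ)
    (Rydk : Matrix (Fin M) (Fin Q) ℝ) (hRydk : Rydk = Rydq * D)
    (Xq : Matrix (Fin M) (Fin Q) ℝ) (hXq : Xq = Ryy⁻¹ * Rydq)
    (hinv : IsUnit (Xqᵀ * Ryy * Xq))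
    (g : Matrix (Fin Q) (Fin Q) ℝ → ℝ)
    (hg : ∀ F : Matrix (Fin Q) (Fin Q) ℝ,
      g F = (Rdkdk - 2 • (Fᵀ * Xqᵀ * Rydk) + Fᵀ * (Xqᵀ * Ryy * Xq) * F).trace) :
    (∀ F : Matrix (Fin Q) (Fin Q) ℝ, g D ≤ g F) ∧
    (∀ F : Matrix (Fin Q) (Fin Q) ℝ, g F = g D → F = D) ∧
    Xq * D = Ryy⁻¹ * Rydk := by
  set A := Xqᵀ * Ryy * Xq
  have hApsd : A.PosSemidef := hR.posSemidef.conjTranspose_mul_mul_same Xq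
  have hApd : A.PosDef := hApsd.posDef_iff_isUnit.mpr hinv
  have hnormal : Xqᵀ * Rydk = A * D := by
    rw [hRydk, ← mul_nonsing_inv_cancel_left Ryy Rydq ((isUnit_iff_isUnit_det _).mp hR.isUnit),
      ← hXq]
    simp only [A, Matrix.mul_assoc]
  have hgF : ∀ F, g F = g D + ((F - D)ᵀ * A * (F - D)).trace := fun F => by
    have hsymm : A.IsSymm := isHermitian_iff_isSymm.mp hApsd.isHermitian
    rw [hg, hg, Matrix.mul_assoc Fᵀ Xqᵀ, Matrix.mul_assoc Dᵀ Xqᵀ, hnormal,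
      trace_sub_two_smul_add_eq_add_trace hsymm, trace_sub_two_smul_add_eq_add_trace hsymm,
      sub_self]
    simp
  refine ⟨fun F => ?_, fun F hF => ?_, ?_⟩
  · rw [hgF F]
    exact le_add_of_nonneg_right (hApsd.conjTranspose_mul_mul_same (F - D)).trace_nonneg
  · rw [hgF F, add_eq_left] at hF
    exact sub_eq_zero.mp (hApd.trace_conjTranspose_mul_mul_same_eq_zero_iff.mp hF)
  · rw [hRydk, hXq, Matrix.mul_assoc]

/-- For the MMSE problem with `d_k = Dᵀ d_q` (`D` invertible), given node `q`'s
centralized solution `X_q* = R_yy⁻¹ R_{y d_q}`, the minimizer over `Q × Q`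
matrices `F` of the compressed MMSE cost
`E[‖d_k - Fᵀ X_q*ᵀ y‖²] = trace(R_{d_k d_k}) - 2 trace(Fᵀ X_q*ᵀ R_{y d_k}) +
trace(Fᵀ X_q*ᵀ R_yy X_q* F)` is `F* = D`, and `X_q* F* = X_k* = R_yy⁻¹ R_{y d_k}`
recovers node `k`'s centralized MMSE solution. -/
theorem mmse_compressed_recovery {M Q : ℕ}
    (Ryy : Matrix (Fin M) (Fin M) ℝ) (hR : Ryy.PosDef)
    (Rydq : Matrix (Fin M) (Fin Q) ℝ)
    (Rdkdk : Matrix (Fin Q) (Fin Q) ℝ)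
    (D : Matrix (Fin Q) (Fin Q) ℝ) (hD : IsUnit D)
    (Rydk : Matrix (Fin M) (Fin Q) ℝ) (hRydk : Rydk = Rydq * D)
    (Xq : Matrix (Fin M) (Fin Q) ℝ) (hXq : Xq = Ryy⁻¹ * Rydq)
    (hinv : IsUnit (Xqᵀ * Ryy * Xq))
    (g : Matrix (Fin Q) (Fin Q) ℝ → ℝ)
    (hg : ∀ F : Matrix (Fin Q) (Fin Q) ℝ,
      g F = (Rdkdk - 2 • (Fᵀ * Xqᵀ * Rydk) + Fᵀ * (Xqᵀ * Ryy * Xq) * F).trace) :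
    (∀ F : Matrix (Fin Q) (Fin Q) ℝ, g D ≤ g F) ∧
    (∀ F : Matrix (Fin Q) (Fin Q) ℝ, g F = g D → F = D) ∧
    Xq * D = Ryy⁻¹ * Rydk :=
  mmse_compressed_recovery_general Ryy hR Rydq Rdkdk D Rydk hRydk Xq hXq hinv g hg
end
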